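/- arXiv:1105.5352 — 3 statements merged into one kernel-verified Lean document; each statement's English description precedes it below -/
import Mathlib

section
/- Let R be the ring of integers of a number field. Every nonzero ideal I of R can be written in the form (a/b)R ∩ R for some nonzero elements a, b ∈ R, i.e., there exist a, b ∈ R \ {0} such that bI = aR ∩ bR. -/
open UniqueFactorizationMonoid

/-- Key approximation lemma: in a Dedekind domain, given nonzero ideals `I ≠ ⊤` and `J`,
there is a nonzero `b` with `span {b} = J * J'` where `J'` is coprime to `I`. -/
theorem exists_span_eq_mul_coprime {R : Type*} [CommRing R] [IsDedekindDomain R]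
    (I J : Ideal R) (hI0 : I ≠ 0) (hItop : I ≠ ⊤) (hJ0 : J ≠ 0) :
    ∃ b : R, b ≠ 0 ∧ ∃ J' : Ideal R, Ideal.span {b} = J * J' ∧ I ⊔ J' = ⊤ := by
  classical
  have hIJ0 : I * J ≠ 0 := mul_ne_zero hI0 hJ0
  set s : Finset (Ideal R) := (normalizedFactors (I * J)).toFinset with hs
  set v : Ideal R → ℕ := fun P => multiplicity P J with hv
  -- membership criterion for s
  have hmem_s : ∀ P : Ideal R, P.IsPrime → P ≠ ⊥ → P ∣ I * J → P ∈ s := by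
    intro P hP hPbot hdvd
    obtain ⟨Q, hQ, hPQ⟩ := exists_mem_normalizedFactors_of_dvd hIJ0
      (Ideal.prime_of_isPrime hPbot hP).irreducible hdvd
    rw [Multiset.mem_toFinset]
    rwa [associated_iff_eq.mp hPQ]
  have hprime : ∀ P ∈ s, Prime P := fun P hP =>
    prime_of_normalized_factor P (Multiset.mem_toFinset.mp hP)
  have hfin : ∀ P ∈ s, FiniteMultiplicity P J := fun P hP =>
    FiniteMultiplicity.of_not_isUnit (hprime P hP).not_isUnit hJ0
  -- choose x P ∈ J \ P^(v P + 1)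
  have hex : ∀ P ∈ s, ∃ x, x ∈ J ∧ x ∉ P ^ (v P + 1) := by
    intro P hP
    have : ¬ P ^ (v P + 1) ∣ J :=
      (hfin P hP).not_pow_dvd_of_multiplicity_lt (lt_add_one _)
    rw [Ideal.dvd_iff_le] at this
    obtain ⟨x, hx1, hx2⟩ := SetLike.not_le_iff_exists.mp this
    exact ⟨x, hx1, hx2⟩
  choose! x hxJ hxP using hex
  obtain ⟨b, hb⟩ := IsDedekindDomain.exists_forall_sub_mem_ideal (s := s) id
    (fun P => v P + 1) hprime (fun i _ j _ h => h) (fun P => x P)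
  simp only [id] at hb
  -- b ∈ P ^ v P and b ∉ P ^ (v P + 1) for all P ∈ s
  have hbmem : ∀ P ∈ s, b ∈ P ^ (v P) := by
    intro P hP
    have h1 : b - x P ∈ P ^ (v P) :=
      Ideal.pow_le_pow_right (Nat.le_succ _) (hb P hP)
    have h2 : x P ∈ P ^ (v P) := by
      have : P ^ (v P) ∣ J := pow_multiplicity_dvd P J
      exact Ideal.le_of_dvd this (hxJ P hP)
    simpa using add_mem h1 h2
  have hbnot : ∀ P ∈ s, b ∉ P ^ (v P + 1) := by
    intro P hP hmem
    exact hxP P hP (by simpa using sub_mem hmem (hb P hP))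
  -- b ≠ 0
  have hbne : b ≠ 0 := by
    obtain ⟨P0, hP0irr, hP0dvd⟩ := WfDvdMonoid.exists_irreducible_factor
      (mt Ideal.isUnit_iff.mp hItop) hI0
    have hP0 : P0 ∈ s := by
      have hp := hP0irr.prime
      exact hmem_s P0 (Ideal.isPrime_of_prime hp) hp.ne_zero (hP0dvd.mul_right J)
    intro h
    exact hbnot P0 hP0 (h ▸ zero_mem _)
  have hspan0 : Ideal.span {b} ≠ 0 := by
    simpa [Ne, Ideal.span_singleton_eq_bot] using hbne
  -- J ∣ span {b}
  have hJdvd : J ∣ Ideal.span {b} := by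
    rw [dvd_iff_normalizedFactors_le_normalizedFactors hJ0 hspan0, Multiset.le_iff_count]
    intro P
    by_cases hPJ : P ∈ normalizedFactors J
    · have hPs : P ∈ s := by
        have hp := prime_of_normalized_factor P hPJ
        exact hmem_s P (Ideal.isPrime_of_prime hp) hp.ne_zero
          ((dvd_of_mem_normalizedFactors hPJ).mul_left I)
      have hirr := (prime_of_normalized_factor P hPJ).irreducible
      have hcJ : Multiset.count P (normalizedFactors J) = v P := by
        have := emultiplicity_eq_count_normalizedFactors hirr hJ0
        rw [normalize_eq] at this
        have h2 := (hfin P hPs).emultiplicity_eq_multiplicity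
        rw [h2] at this
        exact_mod_cast this.symm
      have hcb : (v P : ℕ∞) ≤ Multiset.count P (normalizedFactors (Ideal.span {b})) := by
        have hdvd : P ^ (v P) ∣ Ideal.span {b} :=
          Ideal.dvd_iff_le.mpr ((Ideal.span_singleton_le_iff_mem _).mpr (hbmem P hPs))
        have := pow_dvd_iff_le_emultiplicity.mp hdvd
        rwa [emultiplicity_eq_count_normalizedFactors hirr hspan0, normalize_eq] at this
      rw [hcJ]
      exact_mod_cast hcb
    · simp [Multiset.count_eq_zero_of_notMem hPJ]
  obtain ⟨J', hJ'⟩ := hJdvd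
  refine ⟨b, hbne, J', hJ', ?_⟩
  -- coprimality
  by_contra htop
  obtain ⟨P, hPmax, hle⟩ := Ideal.exists_le_maximal _ htop
  have hPbot : P ≠ ⊥ := by
    rintro rfl
    exact hI0 (le_bot_iff.mp ((le_sup_left : I ≤ I ⊔ J').trans hle))
  have hPs : P ∈ s := hmem_s P hPmax.isPrime hPbot
    ((Ideal.dvd_iff_le.mpr ((le_sup_left : I ≤ I ⊔ J').trans hle)).mul_right J)
  have hble : Ideal.span {b} ≤ P ^ (v P + 1) := by
    rw [hJ']
    calc J * J' ≤ P ^ (v P) * P := Ideal.mul_mono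
          (Ideal.le_of_dvd (pow_multiplicity_dvd P J))
          ((le_sup_right : J' ≤ I ⊔ J').trans hle)
      _ = P ^ (v P + 1) := (pow_succ P (v P)).symm
  exact hbnot P hPs (hble (Ideal.mem_span_singleton_self b))

open NumberField

/-- Every nonzero ideal `I` of the ring of integers of a number field can be written
as `(a/b)R ∩ R`, i.e. there exist nonzero `a, b` with `bI = aR ∩ bR`. -/
theorem ideal_eq_fractional_inter
    (K : Type*) [Field K] [NumberField K]
    (I : Ideal (𝓞 K)) (hI : I ≠ ⊥) :
    ∃ a b : 𝓞 K, a ≠ 0 ∧ b ≠ 0 ∧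
      Ideal.span {b} * I = Ideal.span {a} ⊓ Ideal.span {b} := by
  by_cases hItop : I = ⊤
  · exact ⟨1, 1, one_ne_zero, one_ne_zero, by simp [hItop]⟩
  obtain ⟨a, haI, ha0⟩ := Submodule.exists_mem_ne_zero_of_ne_bot hI
  have hspan_a : Ideal.span {a} ≤ I := (Ideal.span_singleton_le_iff_mem _).mpr haI
  obtain ⟨J, hJ⟩ := Ideal.dvd_iff_le.mpr hspan_a
  have hJ0 : J ≠ 0 := by
    rintro rfl
    rw [mul_zero] at hJ
    exact ha0 (by simpa [Ideal.span_singleton_eq_bot] using hJ)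
  obtain ⟨b, hb0, J', hbJ, hcop⟩ := exists_span_eq_mul_coprime I J hI hItop hJ0
  refine ⟨a, b, ha0, hb0, ?_⟩
  have key : Ideal.span {a} ⊔ Ideal.span {b} = J := by
    rw [hJ, hbJ, mul_comm I J, ← Ideal.mul_sup, hcop, Ideal.mul_top]
  have h2 := Ideal.sup_mul_inf (Ideal.span {a}) (Ideal.span {b})
  rw [key] at h2
  apply mul_left_cancel₀ hJ0
  rw [h2, hJ, hbJ]
  ring
end

section
/- Let R be the ring of integers of a number field. For every nonzero ideal I of R and every positive integer n, there exist ideals Q and M of R such that I, Q, M are pairwise coprime, and both IQ and QM are principal ideals. -/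
open NumberField UniqueFactorizationMonoid

theorem aux_coprime_principal {R : Type*} [CommRing R] [IsDomain R] [IsDedekindDomain R]
    (A B : Ideal R) (hA : A ≠ ⊥) (hB : B ≠ ⊥) :
    ∃ C : Ideal R, C ≠ ⊥ ∧ A ⊔ C = ⊤ ∧ (B * C).IsPrincipal := by
  classical
  by_cases hAB : A * B = ⊤
  · have hBtop : B = ⊤ := top_le_iff.mp (hAB ▸ Ideal.mul_le_right)
    refine ⟨⊤, ?_, sup_top_eq A, ?_⟩
    · exact top_ne_bot
    · exact ⟨⟨1, by simp [hBtop, Ideal.span_singleton_one]⟩⟩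
  have hAB0 : A * B ≠ ⊥ := by
    simp [Ideal.mul_eq_bot, hA, hB]
  set T : Finset (Ideal R) := (normalizedFactors (A * B)).toFinset with hT
  set c : Ideal R → ℕ := fun p => (normalizedFactors B).count p with hc
  have hmemT : ∀ p : Ideal R, p ∈ T ↔ p.IsPrime ∧ A * B ≤ p := by
    intro p
    rw [hT, Multiset.mem_toFinset, Ideal.mem_normalizedFactors_iff hAB0]
  have hprime : ∀ p ∈ T, Prime p := by
    intro p hp
    exact prime_of_normalized_factor p (Multiset.mem_toFinset.mp hp)
  have hpne : ∀ p ∈ T, p ≠ ⊥ ∧ p ≠ ⊤ := by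
    intro p hp
    exact ⟨(hprime p hp).ne_zero, fun h => (hprime p hp).not_isUnit (Ideal.isUnit_iff.mpr h)⟩
  -- choose elements of exact valuation
  have hx : ∀ p : T, ∃ z, z ∈ (p : Ideal R) ^ c p ∧ z ∉ (p : Ideal R) ^ (c p + 1) := by
    rintro ⟨p, hp⟩
    obtain ⟨z, hz1, hz2⟩ :=
      Ideal.exists_mem_pow_notMem_pow_succ p (hpne p hp).1 (hpne p hp).2 (c p)
    exact ⟨z, hz1, hz2⟩
  choose x hx1 hx2 using hx
  obtain ⟨y, hy⟩ := IsDedekindDomain.exists_forall_sub_mem_ideal (s := T) id (fun p => c p + 1)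
    hprime (fun i _ j _ hij => hij) x
  have key : ∀ p (hp : p ∈ T), y ∈ p ^ c p ∧ y ∉ p ^ (c p + 1) := by
    intro p hp
    have h1 := hy p hp
    constructor
    · have : (p : Ideal R) ^ (c p + 1) ≤ p ^ c p := Ideal.pow_le_pow_right (Nat.le_succ _)
      have := sub_add_cancel y (x ⟨p, hp⟩) ▸ Ideal.add_mem _ (this h1) (hx1 ⟨p, hp⟩)
      exact this
    · intro hmem
      exact hx2 ⟨p, hp⟩ (by simpa using Ideal.sub_mem _ hmem h1)
  have hTne : T.Nonempty := by
    rw [hT, Multiset.toFinset_nonempty]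
    intro h0
    apply hAB
    have := associated_iff_eq.mp (prod_normalizedFactors hAB0)
    rw [h0, Multiset.prod_zero] at this
    rw [← this, Ideal.one_eq_top]
  have hy0 : y ≠ 0 := by
    obtain ⟨p, hp⟩ := hTne
    intro h
    exact (key p hp).2 (h ▸ Ideal.zero_mem _)
  -- pairwise coprimality of prime powers
  have hcop : ∀ p ∈ T, ∀ q ∈ T, p ≠ q → IsCoprime ((p : Ideal R) ^ c p) (q ^ c q) := by
    intro p hp q hq hpq
    haveI := Ideal.isPrime_of_prime (hprime p hp)
    haveI := Ideal.isPrime_of_prime (hprime q hq)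
    apply Ideal.coprime_of_no_prime_ge
    intro P hPp hPq hPprime
    have h1 := (Ring.DimensionLeOne.prime_le_prime_iff_eq (hprime p hp).ne_zero).mp
      (hPprime.le_of_pow_le hPp)
    have h2 := (Ring.DimensionLeOne.prime_le_prime_iff_eq (hprime q hq).ne_zero).mp
      (hPprime.le_of_pow_le hPq)
    exact hpq (h1.trans h2.symm)
  -- B divides (y)
  have hTbT : (normalizedFactors B).toFinset ⊆ T := by
    intro p hp
    rw [Multiset.mem_toFinset] at hp
    rw [hmemT]
    obtain ⟨h1, h2⟩ := (Ideal.mem_normalizedFactors_iff hB).mp hp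
    exact ⟨h1, le_trans Ideal.mul_le_right h2⟩
  have hBfac : B = ∏ p ∈ (normalizedFactors B).toFinset, p ^ c p := by
    conv_lhs => rw [← associated_iff_eq.mp (prod_normalizedFactors hB)]
    exact Finset.prod_multiset_count _
  have hBdvd : B ∣ Ideal.span {y} := by
    rw [hBfac]
    apply Finset.prod_dvd_of_coprime
    · intro p hp q hq hpq
      exact hcop p (hTbT hp) q (hTbT hq) hpq
    · intro p hp
      rw [Ideal.dvd_span_singleton]
      exact (key p (hTbT hp)).1
  obtain ⟨C, hC⟩ := hBdvd
  refine ⟨C, ?_, ?_, ⟨⟨y, hC.symm⟩⟩⟩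
  · intro h
    rw [h, Ideal.mul_bot] at hC
    exact hy0 (Ideal.span_singleton_eq_bot.mp hC)
  · by_contra hsup
    obtain ⟨m, hm, hle⟩ := Ideal.exists_le_maximal _ hsup
    haveI hmp : m.IsPrime := hm.isPrime
    have hmT : m ∈ T := (hmemT m).mpr ⟨hmp, le_trans Ideal.mul_le_left
      (le_sup_left.trans hle)⟩
    -- p^(c p) ∣ B and m ∣ C give m^(c m + 1) ∣ B * C = (y)
    have hpowB : m ^ c m ∣ B := by
      have hle2 : Multiset.replicate (c m) m ≤ normalizedFactors B :=
        Multiset.le_count_iff_replicate_le.mp le_rfl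
      calc m ^ c m = (Multiset.replicate (c m) m).prod := (Multiset.prod_replicate _ _).symm
        _ ∣ (normalizedFactors B).prod := Multiset.prod_dvd_prod_of_le hle2
        _ = B := associated_iff_eq.mp (prod_normalizedFactors hB)
    have hmC : m ∣ C := Ideal.dvd_iff_le.mpr (le_sup_right.trans hle)
    have : m ^ (c m + 1) ∣ Ideal.span {y} := by
      rw [hC, pow_succ]
      exact mul_dvd_mul hpowB hmC
    rw [Ideal.dvd_span_singleton] at this
    exact (key m hmT).2 this
  
/-- For every nonzero ideal `I` of the ring of integers of a number field and every
positive integer `n`, there exist ideals `Q, M` such that `I, Q, M` are pairwise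
coprime and `IQ` and `QM` are principal. -/
theorem exists_coprime_ideals_mul_principal
    (K : Type*) [Field K] [NumberField K]
    (I : Ideal (𝓞 K)) (hI : I ≠ ⊥) (n : ℕ) (hn : 0 < n) :
    ∃ Q M : Ideal (𝓞 K),
      I ⊔ Q = ⊤ ∧ I ⊔ M = ⊤ ∧ Q ⊔ M = ⊤ ∧
      (I * Q).IsPrincipal ∧ (Q * M).IsPrincipal := by
  obtain ⟨Q, hQ0, hIQ, hIQP⟩ := aux_coprime_principal I I hI hI
  have hIQbot : I * Q ≠ ⊥ := by simp [Ideal.mul_eq_bot, hI, hQ0]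
  obtain ⟨M, hM0, hIQM, hQMP⟩ := aux_coprime_principal (I * Q) Q hIQbot hQ0
  refine ⟨Q, M, hIQ, ?_, ?_, hIQP, hQMP⟩
  · exact eq_top_iff.mpr (le_trans hIQM.ge (sup_le_sup_right Ideal.mul_le_left M))
  · exact eq_top_iff.mpr (le_trans hIQM.ge (sup_le_sup_right Ideal.mul_le_right M))
end

section
/- Let R be the ring of integers of a number field. The set of norm-minimizing prime ideals generates the ideal class group: every ideal class is a product of classes of norm-minimizing prime ideals. -/
open NumberField
open scoped nonZeroDivisors

variable {K : Type*} [Field K] [NumberField K]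

/-- Two nonzero ideals are in the same ideal class. -/
def SameClass (I J : Ideal (𝓞 K)) : Prop :=
  ∃ (hI : I ∈ (Ideal (𝓞 K))⁰) (hJ : J ∈ (Ideal (𝓞 K))⁰),
    ClassGroup.mk0 ⟨I, hI⟩ = ClassGroup.mk0 ⟨J, hJ⟩

/-- A nonzero ideal is norm-minimizing if its norm is minimal among the norms of all
integral ideals in the same ideal class. -/
def IsNormMinimizing (I : Ideal (𝓞 K)) : Prop :=
  I ≠ ⊥ ∧ ∀ J : Ideal (𝓞 K), SameClass I J → Ideal.absNorm I ≤ Ideal.absNorm J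

lemma mem_nzd_iff {I : Ideal (𝓞 K)} : I ∈ (Ideal (𝓞 K))⁰ ↔ I ≠ 0 :=
  mem_nonZeroDivisors_iff_ne_zero

/-- Every nonzero ideal is in the same class as a norm-minimizing ideal. -/
lemma exists_normMinimizing (I : Ideal (𝓞 K)) (hI : I ∈ (Ideal (𝓞 K))⁰) :
    ∃ J : Ideal (𝓞 K), SameClass I J ∧ IsNormMinimizing J := by
  classical
  have hne : {n : ℕ | ∃ J : Ideal (𝓞 K), SameClass I J ∧ Ideal.absNorm J = n}.Nonempty :=
    ⟨Ideal.absNorm I, I, ⟨hI, hI, rfl⟩, rfl⟩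
  obtain ⟨n, ⟨J, hIJ, hJn⟩, hmin⟩ := Nat.lt_wfRel.wf.has_min _ hne
  obtain ⟨hI', hJ', hcl⟩ := hIJ
  refine ⟨J, ⟨hI', hJ', hcl⟩, mem_nzd_iff.mp hJ', ?_⟩
  intro J' hJJ'
  obtain ⟨hJ2, hJ'2, hcl2⟩ := hJJ'
  have hIJ' : SameClass I J' := ⟨hI', hJ'2, by rw [hcl]; exact hcl2⟩
  have := hmin (Ideal.absNorm J') ⟨J', hIJ', rfl⟩
  change ¬ Ideal.absNorm J' < n at this
  omega

/-- A factor of a norm-minimizing ideal is norm-minimizing. -/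
lemma factor_normMinimizing {P Q : Ideal (𝓞 K)} (hP : P ∈ (Ideal (𝓞 K))⁰)
    (hQ : Q ∈ (Ideal (𝓞 K))⁰) (h : IsNormMinimizing (P * Q)) : IsNormMinimizing P := by
  refine ⟨mem_nzd_iff.mp hP, ?_⟩
  intro J hPJ
  obtain ⟨hP', hJ', hcl⟩ := hPJ
  have hQ0 : Q ≠ 0 := mem_nzd_iff.mp hQ
  have hPQ : P * Q ∈ (Ideal (𝓞 K))⁰ := mul_mem hP hQ
  have hJQ : J * Q ∈ (Ideal (𝓞 K))⁰ := mul_mem hJ' hQ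
  have hsame : SameClass (P * Q) (J * Q) := by
    refine ⟨hPQ, hJQ, ?_⟩
    have h1 : (⟨P * Q, hPQ⟩ : (Ideal (𝓞 K))⁰) = ⟨P, hP'⟩ * ⟨Q, hQ⟩ := rfl
    have h2 : (⟨J * Q, hJQ⟩ : (Ideal (𝓞 K))⁰) = ⟨J, hJ'⟩ * ⟨Q, hQ⟩ := rfl
    rw [h1, h2, MonoidHom.map_mul, MonoidHom.map_mul, hcl]
  have hle := h.2 (J * Q) hsame
  rw [map_mul Ideal.absNorm, map_mul Ideal.absNorm] at hle
  have hQpos : 0 < Ideal.absNorm Q := by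
    rcases Nat.eq_zero_or_pos (Ideal.absNorm Q) with h0 | h0
    · exact absurd (Ideal.absNorm_eq_zero_iff.mp h0) hQ0
    · exact h0
  exact Nat.le_of_mul_le_mul_right hle hQpos

/-- Main induction: the class of a norm-minimizing ideal lies in the closure. -/
lemma mk0_mem_closure :
    ∀ n (I : Ideal (𝓞 K)) (hI : I ∈ (Ideal (𝓞 K))⁰), Ideal.absNorm I = n →
      IsNormMinimizing I →
      ClassGroup.mk0 ⟨I, hI⟩ ∈ Subgroup.closure
        {c : ClassGroup (𝓞 K) | ∃ P : (Ideal (𝓞 K))⁰,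
          (P : Ideal (𝓞 K)).IsPrime ∧ IsNormMinimizing (P : Ideal (𝓞 K)) ∧
            ClassGroup.mk0 P = c} := by
  intro n
  induction n using Nat.strong_induction_on with
  | _ n ih =>
    intro I hI hn hmin
    by_cases htop : I = ⊤
    · subst htop
      have h1 : (⟨(⊤ : Ideal (𝓞 K)), hI⟩ : (Ideal (𝓞 K))⁰) = 1 :=
        Subtype.ext Ideal.one_eq_top.symm
      rw [h1, MonoidHom.map_one]
      exact Subgroup.one_mem _
    · obtain ⟨P, hPmax, hle⟩ := Ideal.exists_le_maximal I htop
      have hPdvd : P ∣ I := Ideal.dvd_iff_le.mpr hle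
      obtain ⟨Q, hQ⟩ := hPdvd
      have hI0 : I ≠ 0 := mem_nzd_iff.mp hI
      have hP0 : P ≠ 0 := by rintro rfl; rw [zero_mul] at hQ; exact hI0 hQ
      have hQ0 : Q ≠ 0 := by rintro rfl; rw [mul_zero] at hQ; exact hI0 hQ
      have hPnz : P ∈ (Ideal (𝓞 K))⁰ := mem_nzd_iff.mpr hP0
      have hQnz : Q ∈ (Ideal (𝓞 K))⁰ := mem_nzd_iff.mpr hQ0
      have hminPQ : IsNormMinimizing (P * Q) := hQ ▸ hmin
      have hPmin : IsNormMinimizing P := factor_normMinimizing hPnz hQnz hminPQ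
      have hQmin : IsNormMinimizing Q := by
        rw [mul_comm] at hminPQ
        exact factor_normMinimizing hQnz hPnz hminPQ
      have hNP : 2 ≤ Ideal.absNorm P := by
        have h1 : Ideal.absNorm P ≠ 1 := fun h =>
          hPmax.ne_top (Ideal.absNorm_eq_one_iff.mp h)
        have h0 : Ideal.absNorm P ≠ 0 := fun h => hP0 (Ideal.absNorm_eq_zero_iff.mp h)
        omega
      have hNQpos : 0 < Ideal.absNorm Q := by
        rcases Nat.eq_zero_or_pos (Ideal.absNorm Q) with h0 | h0
        · exact absurd (Ideal.absNorm_eq_zero_iff.mp h0) hQ0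
        · exact h0
      have hNI : Ideal.absNorm I = Ideal.absNorm P * Ideal.absNorm Q := by
        rw [hQ, map_mul Ideal.absNorm]
      have hQlt : Ideal.absNorm Q < n := by
        rw [← hn, hNI]; nlinarith
      have hQmem := ih (Ideal.absNorm Q) hQlt Q hQnz rfl hQmin
      have hPmem : ClassGroup.mk0 (⟨P, hPnz⟩ : (Ideal (𝓞 K))⁰) ∈ Subgroup.closure
          {c : ClassGroup (𝓞 K) | ∃ P : (Ideal (𝓞 K))⁰,
            (P : Ideal (𝓞 K)).IsPrime ∧ IsNormMinimizing (P : Ideal (𝓞 K)) ∧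
              ClassGroup.mk0 P = c} :=
        Subgroup.subset_closure ⟨⟨P, hPnz⟩, hPmax.isPrime, hPmin, rfl⟩
      have heq : (⟨I, hI⟩ : (Ideal (𝓞 K))⁰) = ⟨P, hPnz⟩ * ⟨Q, hQnz⟩ :=
        Subtype.ext hQ
      rw [heq, MonoidHom.map_mul]
      exact mul_mem hPmem hQmem

/-- The classes of norm-minimizing prime ideals generate the ideal class group. -/
theorem closure_normMinimizing_primes_eq_top :
    Subgroup.closure
      {c : ClassGroup (𝓞 K) | ∃ P : (Ideal (𝓞 K))⁰,
        (P : Ideal (𝓞 K)).IsPrime ∧ IsNormMinimizing (P : Ideal (𝓞 K)) ∧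
          ClassGroup.mk0 P = c} = ⊤ := by
  rw [eq_top_iff]
  intro c _
  obtain ⟨I, rfl⟩ := ClassGroup.mk0_surjective c
  obtain ⟨J, ⟨hI', hJ', hcl⟩, hJmin⟩ := exists_normMinimizing (I : Ideal (𝓞 K)) I.2
  have h2 : ClassGroup.mk0 I = ClassGroup.mk0 ⟨J, hJ'⟩ := by
    have h3 : (⟨(I : Ideal (𝓞 K)), hI'⟩ : (Ideal (𝓞 K))⁰) = I := rfl
    rw [← h3]; exact hcl
  rw [h2]
  exact mk0_mem_closure _ _ hJ' rfl hJmin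
end
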